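/- Let V be a δ-GAS Lyapunov function for f with class-𝒦∞ functions α̲, ᾱ, ρ and bounding function σ, assume s ↦ s − ρ(s) is nondecreasing on [0,∞), and let μ > 0 and ε ≥ 0 satisfy σ(ε) ≤ ρ(α̲(μ)). Let u : ℕ → U be an input sequence and let x, ξ : ℕ → ℝⁿ be sequences satisfying x(t+1) = f(x(t), u(t)) and ‖ξ(t+1) − f(ξ(t), u(t))‖ ≤ ε for all t ∈ ℕ, with V(x(0), ξ(0)) ≤ α̲(μ). Then for every t ∈ ℕ, V(x(t), ξ(t)) ≤ α̲(μ), and consequently ‖x(t) − ξ(t)‖ ≤ μ. -/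

import Mathlib

open Filter

/-- A class-𝒦∞ function: continuous, strictly increasing on `[0,∞)`, vanishing
at `0`, tending to `∞`, and mapping `[0,∞)` into `[0,∞)`. -/
def IsKInf (g : ℝ → ℝ) : Prop :=
  ContinuousOn g (Set.Ici 0) ∧ StrictMonoOn g (Set.Ici 0) ∧ g 0 = 0 ∧
    Tendsto g atTop atTop ∧ ∀ s, 0 ≤ s → 0 ≤ g s

/-! If `V(x, ξ) ≤ c` with `σ(ε) ≤ ρ(c)`, one step of the exact system and of the perturbed one
gives `V ≤ (V - ρ V) + σ ε ≤ (c - ρ c) + ρ c = c`, using that `s ↦ s - ρ s` is nondecreasing: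
the sublevel set `{V ≤ c}` is invariant along perturbed trajectories. Since `α̲(‖x - ξ‖) ≤ V`,
the choice `c = α̲(μ)` yields `‖x - ξ‖ ≤ μ`. -/

namespace IsKInf

variable {g : ℝ → ℝ}

theorem nonneg (hg : IsKInf g) {s : ℝ} (hs : 0 ≤ s) : 0 ≤ g s := hg.2.2.2.2 s hs

theorem strictMonoOn (hg : IsKInf g) : StrictMonoOn g (Set.Ici 0) := hg.2.1

theorem monotoneOn (hg : IsKInf g) : MonotoneOn g (Set.Ici 0) := hg.strictMonoOn.monotoneOn

theorem le_iff_le (hg : IsKInf g) {a b : ℝ} (ha : 0 ≤ a) (hb : 0 ≤ b) : g a ≤ g b ↔ a ≤ b :=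
  hg.strictMonoOn.le_iff_le ha hb

end IsKInf

section Tracking

variable {E U : Type*} [SeminormedAddCommGroup E] {V : E → E → ℝ} {σ ρ : ℝ → ℝ}

theorem le_add_of_bounding (hσbound : ∀ x y z, |V x y - V x z| ≤ σ ‖y - z‖)
    (hσ : MonotoneOn σ (Set.Ici 0)) {x y z : E} {ε : ℝ} (hyz : ‖y - z‖ ≤ ε) :
    V x y ≤ V x z + σ ε := by
  have hσε : σ ‖y - z‖ ≤ σ ε := hσ (norm_nonneg _) ((norm_nonneg _).trans hyz) hyz
  linarith [(abs_le.mp (hσbound x y z)).2]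

theorem lyapunov_perturbed_step_le {f : E → U → E}
    (hσbound : ∀ x y z, |V x y - V x z| ≤ σ ‖y - z‖) (hσ : MonotoneOn σ (Set.Ici 0))
    (hVdec : ∀ x x' u, V (f x u) (f x' u) - V x x' ≤ -ρ (V x x'))
    (hmono : MonotoneOn (fun s => s - ρ s) (Set.Ici 0)) {c ε : ℝ} (hσρ : σ ε ≤ ρ c)
    {x ξ ξ' : E} {u : U} (hV : 0 ≤ V x ξ) (hc : V x ξ ≤ c) (hξ' : ‖ξ' - f ξ u‖ ≤ ε) :
    V (f x u) ξ' ≤ c := by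
  have hperturb := le_add_of_bounding (x := f x u) hσbound hσ hξ'
  have hdecay := hVdec x ξ u
  have hshift : V x ξ - ρ (V x ξ) ≤ c - ρ c := hmono hV (hV.trans hc) hc
  linarith

theorem lyapunov_perturbed_trajectory_le {f : E → U → E}
    (hσbound : ∀ x y z, |V x y - V x z| ≤ σ ‖y - z‖) (hσ : MonotoneOn σ (Set.Ici 0))
    (hVdec : ∀ x x' u, V (f x u) (f x' u) - V x x' ≤ -ρ (V x x'))
    (hmono : MonotoneOn (fun s => s - ρ s) (Set.Ici 0)) (hV : ∀ x x', 0 ≤ V x x')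
    {c ε : ℝ} (hσρ : σ ε ≤ ρ c) {u : ℕ → U} {x ξ : ℕ → E}
    (hx : ∀ t, x (t + 1) = f (x t) (u t)) (hξ : ∀ t, ‖ξ (t + 1) - f (ξ t) (u t)‖ ≤ ε)
    (h0 : V (x 0) (ξ 0) ≤ c) (t : ℕ) : V (x t) (ξ t) ≤ c := by
  induction t with
  | zero => exact h0
  | succ t ih =>
    rw [hx t]
    exact lyapunov_perturbed_step_le hσbound hσ hVdec hmono hσρ (hV _ _) ih (hξ t)

end Tracking

theorem stmt_3_general {n : ℕ} {U : Type*}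
    (f : (Fin n → ℝ) → U → (Fin n → ℝ))
    (V : (Fin n → ℝ) → (Fin n → ℝ) → ℝ)
    (α₁ ρ σ : ℝ → ℝ)
    (hα₁ : IsKInf α₁) (hσ : IsKInf σ)
    (hVlow : ∀ x x', α₁ ‖x - x'‖ ≤ V x x')
    (hVdec : ∀ x x' u, V (f x u) (f x' u) - V x x' ≤ -ρ (V x x'))
    (hσbound : ∀ x y z, |V x y - V x z| ≤ σ ‖y - z‖)
    (hmono : MonotoneOn (fun s => s - ρ s) (Set.Ici 0))
    (μ ε : ℝ) (hμ : 0 < μ)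
    (hεμ : σ ε ≤ ρ (α₁ μ))
    (u : ℕ → U) (x ξ : ℕ → (Fin n → ℝ))
    (hx : ∀ t, x (t + 1) = f (x t) (u t))
    (hξ : ∀ t, ‖ξ (t + 1) - f (ξ t) (u t)‖ ≤ ε)
    (h0 : V (x 0) (ξ 0) ≤ α₁ μ) :
    ∀ t : ℕ, V (x t) (ξ t) ≤ α₁ μ ∧ ‖x t - ξ t‖ ≤ μ := by
  have hV : ∀ x x', 0 ≤ V x x' := fun x x' => (hα₁.nonneg (norm_nonneg _)).trans (hVlow x x')
  intro t
  have hVt : V (x t) (ξ t) ≤ α₁ μ :=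
    lyapunov_perturbed_trajectory_le hσbound hσ.monotoneOn hVdec hmono hV hεμ hx hξ h0 t
  refine ⟨hVt, ?_⟩
  exact (hα₁.le_iff_le (norm_nonneg _) hμ.le).mp ((hVlow _ _).trans hVt)

theorem stmt_3 {n : ℕ} {U : Type*} [Nonempty U]
    (f : (Fin n → ℝ) → U → (Fin n → ℝ))
    (V : (Fin n → ℝ) → (Fin n → ℝ) → ℝ)
    (α₁ α₂ ρ σ : ℝ → ℝ)
    (hα₁ : IsKInf α₁) (hα₂ : IsKInf α₂) (hρ : IsKInf ρ) (hσ : IsKInf σ)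
    (hV0 : ∀ x x', 0 ≤ V x x')
    (hVlow : ∀ x x', α₁ ‖x - x'‖ ≤ V x x')
    (hVup : ∀ x x', V x x' ≤ α₂ ‖x - x'‖)
    (hVdec : ∀ x x' u, V (f x u) (f x' u) - V x x' ≤ -ρ (V x x'))
    (hσbound : ∀ x y z, |V x y - V x z| ≤ σ ‖y - z‖)
    (hmono : MonotoneOn (fun s => s - ρ s) (Set.Ici 0))
    (μ ε : ℝ) (hμ : 0 < μ) (hε : 0 ≤ ε)
    (hεμ : σ ε ≤ ρ (α₁ μ))
    (u : ℕ → U) (x ξ : ℕ → (Fin n → ℝ))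
    (hx : ∀ t, x (t + 1) = f (x t) (u t))
    (hξ : ∀ t, ‖ξ (t + 1) - f (ξ t) (u t)‖ ≤ ε)
    (h0 : V (x 0) (ξ 0) ≤ α₁ μ) :
    ∀ t : ℕ, V (x t) (ξ t) ≤ α₁ μ ∧ ‖x t - ξ t‖ ≤ μ :=
  stmt_3_general f V α₁ ρ σ hα₁ hσ hVlow hVdec hσbound hmono μ ε hμ hεμ u x ξ hx hξ h0
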